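/- Assume S_F ≠ ∅ and that the closure of A_F has nonempty interior in M. Then for every point z = (ϑ, x) ∈ Σ_k × M such that the forward orbit {σ^n(ϑ) : n ≥ 0} is dense in Σ_k, the ω-limit set ω_F(z) equals the closure of graph ρ. -/

import Mathlib

open Set Function Filter Topology

noncomputable section

/-- The shift map on two-sided sequences. -/
def shiftMap {k : ℕ} (θ : ℤ → Fin k) : ℤ → Fin k := fun i => θ (i + 1)

/-- The step skew product `F(θ, x) = (σ θ, f_{θ₀} x)`. -/
def skewProd {k : ℕ} {M : Type*} (f : Fin k → M → M) :
    (ℤ → Fin k) × M → (ℤ → Fin k) × M :=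
  fun p => (shiftMap p.1, f (p.1 0) p.2)

/-- Backward composition `f_{θ₋₁} ∘ ⋯ ∘ f_{θ₋ₙ}`. -/
def bcomp {k : ℕ} {M : Type*} (f : Fin k → M → M) (θ : ℤ → Fin k) : ℕ → M → M
  | 0 => id
  | n + 1 => bcomp f θ n ∘ f (θ (-((n : ℤ) + 1)))

/-- The spine `I_θ = ⋂_{n ≥ 1} f_{θ₋₁} ∘ ⋯ ∘ f_{θ₋ₙ}(M)`. -/
def spine {k : ℕ} {M : Type*} (f : Fin k → M → M) (θ : ℤ → Fin k) : Set M :=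
  ⋂ n : ℕ, bcomp f θ (n + 1) '' Set.univ

/-- The set of weakly hyperbolic sequences: those `θ` whose spine is a singleton. -/
def weakHyp {k : ℕ} {M : Type*} (f : Fin k → M → M) : Set (ℤ → Fin k) :=
  {θ | ∃ x : M, spine f θ = {x}}

/-- The ω-limit set of a point `z` under iteration of `F`: limits of subsequences
`F^{n_j}(z)` with `n_j → ∞`. -/
def omegaLim {α : Type*} [TopologicalSpace α] (F : α → α) (z : α) : Set α :=
  {w | ∃ φ : ℕ → ℕ, StrictMono φ ∧ Tendsto (fun j => F^[φ j] z) atTop (𝓝 w)}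

/-!
Write `A = ρ(S_F)`. Each `f i` maps `A` into itself: placing a symbol `i` after a weakly
hyperbolic past gives a weakly hyperbolic sequence whose coding point is moved by `f i`. Hence
`closure A` is forward invariant. Since `ρ ϑ` is the limit of the nested images
`f_{ϑ₋₁} ∘ ⋯ ∘ f_{ϑ₋ₙ}(M)`, whenever the base orbit copies a long block of the past of some
`ϑ ∈ S_F`, the fibre coordinate is close to `ρ ϑ`. A dense base orbit copies every finite block
infinitely often. This puts the graph of `ρ` into the ω-limit set. Copying a block whose coding
point lies in the interior of `closure A` traps the fibre orbit in `closure A` from then on.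
So a limit point `(η, y)` has `y ∈ f_{η₋₁} ∘ ⋯ ∘ f_{η₋ₘ}(closure A)` for every `m`, and gluing
`η` on `[-m, ∞)` to weakly hyperbolic pasts approximates `(η, y)` by points of the graph.
-/

theorem iInter_image_eq_image_iInter_of_antitone {X Y : Type*} [TopologicalSpace X]
    [TopologicalSpace Y] [T1Space Y] {g : X → Y} (hg : Continuous g) {K : ℕ → Set X}
    (hK : Antitone K) (hK₀ : IsCompact (K 0)) (hKc : ∀ n, IsClosed (K n)) :
    ⋂ n, g '' K n = g '' ⋂ n, K n := by
  refine Subset.antisymm (fun y hy => ?_) (image_iInter_subset _ _)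
  have hfib : (⋂ n, K n ∩ g ⁻¹' {y}).Nonempty :=
    IsCompact.nonempty_iInter_of_sequence_nonempty_isCompact_isClosed _
      (fun n => inter_subset_inter_left _ (hK n.le_succ))
      (fun n => by obtain ⟨q, hq, rfl⟩ := mem_iInter.mp hy n; exact ⟨q, hq, rfl⟩)
      (hK₀.inter_right (isClosed_singleton.preimage hg))
      (fun n => (hKc n).inter (isClosed_singleton.preimage hg))
  obtain ⟨q, hq⟩ := hfib
  simp only [mem_iInter, mem_inter_iff, mem_preimage, mem_singleton_iff] at hq
  exact ⟨q, mem_iInter.mpr fun n => (hq n).1, (hq 0).2⟩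

theorem frequently_iterate_mem_of_dense_range {X : Type*} [TopologicalSpace X] {g : X → X}
    (hg : Continuous g) (hsurj : Surjective g) {x : X}
    (hdense : Dense (range fun n : ℕ => g^[n] x)) {U : Set X} (hU : IsOpen U)
    (hne : U.Nonempty) : ∃ᶠ n in atTop, g^[n] x ∈ U := by
  refine frequently_atTop.mpr fun N => ?_
  -- `g^[N]` is onto, so `g^[N] ⁻¹' U` is a nonempty open set that the orbit must visit.
  obtain ⟨_, ⟨n, rfl⟩, hn⟩ := hdense.exists_mem_open (hU.preimage (hg.iterate N))
    (hne.preimage (hsurj.iterate N))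
  exact ⟨N + n, le_self_add, by rwa [iterate_add_apply]⟩

theorem omegaLim_eq_setOf_mapClusterPt {α : Type*} [TopologicalSpace α]
    [FirstCountableTopology α] (F : α → α) (z : α) :
    omegaLim F z = {w | MapClusterPt w atTop fun n => F^[n] z} := by
  ext w
  exact ⟨fun ⟨φ, hφ, hlim⟩ => MapClusterPt.of_comp hφ.tendsto_atTop hlim.mapClusterPt,
    fun h => h.tendsto_subseq⟩

section Cylinder

variable {α : Type*}

def cylinder (ξ : ℤ → α) (m : ℕ) : Set (ℤ → α) := (Icc (-(m : ℤ)) m).pi fun i => {ξ i}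

theorem antitone_cylinder (ξ : ℤ → α) : Antitone (cylinder ξ) := fun _ _ h =>
  pi_mono' (fun _ _ => subset_rfl) (Icc_subset_Icc (by omega) (by omega))

theorem isOpen_cylinder [TopologicalSpace α] [DiscreteTopology α] (ξ : ℤ → α) (m : ℕ) :
    IsOpen (cylinder ξ m) :=
  isOpen_set_pi (finite_Icc _ _) fun _ _ => isOpen_discrete _

theorem nhds_basis_cylinder [TopologicalSpace α] [DiscreteTopology α] (ξ : ℤ → α) :
    (𝓝 ξ).HasBasis (fun _ => True) (cylinder ξ) := by
  refine ⟨fun t => ⟨fun ht => ?_, fun ⟨m, _, hm⟩ =>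
    mem_of_superset ((isOpen_cylinder ξ m).mem_nhds fun _ _ => rfl) hm⟩⟩
  simp only [nhds_pi, nhds_discrete, ← principal_singleton] at ht
  obtain ⟨I, hI, hIt⟩ := mem_pi_principal.mp ht
  obtain ⟨a, ha⟩ := hI.bddAbove
  obtain ⟨b, hb⟩ := hI.bddBelow
  refine ⟨(max a (-b)).toNat, trivial, (pi_mono' (fun _ _ => subset_rfl) fun i hi => ?_).trans hIt⟩
  have := Int.self_le_toNat (max a (-b))
  exact ⟨by have := hb hi; omega, by have := ha hi; omega⟩

end Cylinder

section Shift

variable {k : ℕ}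

theorem shiftMap_iterate_apply (θ : ℤ → Fin k) (n : ℕ) (i : ℤ) :
    (shiftMap^[n] θ) i = θ (i + n) := by
  induction n generalizing θ with
  | zero => simp
  | succ n ih =>
    rw [iterate_succ_apply, ih]
    simp only [shiftMap, Nat.cast_succ, add_assoc, add_comm (n : ℤ)]

theorem continuous_shiftMap : Continuous (shiftMap : (ℤ → Fin k) → ℤ → Fin k) :=
  continuous_pi fun i => continuous_apply (i + 1)

theorem surjective_shiftMap : Surjective (shiftMap : (ℤ → Fin k) → ℤ → Fin k) :=
  fun θ => ⟨fun i => θ (i - 1), funext fun i => by simp [shiftMap]⟩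

end Shift

section BackwardComposition

variable {k : ℕ} {M : Type*} {f : Fin k → M → M}

theorem bcomp_one (θ : ℤ → Fin k) : bcomp f θ 1 = f (θ (-1)) := rfl

theorem bcomp_congr {θ θ' : ℤ → Fin k} {n : ℕ} (h : EqOn θ θ' (Ico (-(n : ℤ)) 0)) :
    bcomp f θ n = bcomp f θ' n := by
  induction n with
  | zero => rfl
  | succ n ih =>
    rw [bcomp, bcomp, ih (h.mono (Ico_subset_Ico (by omega) le_rfl)),
      h ⟨by omega, by omega⟩]

theorem bcomp_eq_of_mem_cylinder {ξ χ : ℤ → Fin k} {m : ℕ} (h : χ ∈ cylinder ξ m) :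
    bcomp f χ m = bcomp f ξ m :=
  bcomp_congr fun i hi => h i ⟨hi.1, by linarith [hi.2]⟩

theorem continuous_bcomp [TopologicalSpace M] (hf : ∀ i, Continuous (f i)) (θ : ℤ → Fin k)
    (n : ℕ) : Continuous (bcomp f θ n) := by
  induction n with
  | zero => exact continuous_id
  | succ n ih => exact ih.comp (hf _)

theorem bcomp_add (θ : ℤ → Fin k) (a b : ℕ) :
    bcomp f θ (a + b) = bcomp f θ a ∘ bcomp f (fun i => θ (i - a)) b := by
  induction b with
  | zero => rfl
  | succ b ih =>
    rw [← add_assoc, bcomp, ih, bcomp, comp_assoc]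
    congr 3
    push_cast
    ring_nf

theorem bcomp_shiftMap_iterate_add (χ : ℤ → Fin k) (a b : ℕ) :
    bcomp f (shiftMap^[a] χ) (a + b) = bcomp f (shiftMap^[a] χ) a ∘ bcomp f χ b := by
  rw [bcomp_add]
  congr
  funext i
  simp [shiftMap_iterate_apply]

theorem iterate_skewProd (θ : ℤ → Fin k) (x : M) (n : ℕ) :
    (skewProd f)^[n] (θ, x) = (shiftMap^[n] θ, bcomp f (shiftMap^[n] θ) n x) := by
  induction n with
  | zero => rfl
  | succ n ih =>
    have h := bcomp_shiftMap_iterate_add (f := f) (shiftMap^[n] θ) 1 n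
    rw [← iterate_add_apply, add_comm 1 n, bcomp_one] at h
    rw [iterate_succ_apply', ih, h]
    simp only [iterate_succ_apply']
    rfl

theorem bcomp_orbit_of_le (θ : ℤ → Fin k) {m n : ℕ} (hmn : m ≤ n) :
    bcomp f (shiftMap^[n] θ) n =
      bcomp f (shiftMap^[n] θ) m ∘ bcomp f (shiftMap^[n - m] θ) (n - m) := by
  obtain ⟨d, rfl⟩ := Nat.exists_eq_add_of_le hmn
  rw [iterate_add_apply, bcomp_shiftMap_iterate_add, Nat.add_sub_cancel_left]

theorem bcomp_orbit_of_mem_cylinder {θ ξ : ℤ → Fin k} {m n : ℕ} (hmn : m ≤ n)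
    (h : shiftMap^[n] θ ∈ cylinder ξ m) :
    bcomp f (shiftMap^[n] θ) n = bcomp f ξ m ∘ bcomp f (shiftMap^[n - m] θ) (n - m) := by
  rw [bcomp_orbit_of_le θ hmn, bcomp_eq_of_mem_cylinder h]

end BackwardComposition

section Spine

variable {k : ℕ} {M : Type*} {f : Fin k → M → M}

theorem antitone_range_bcomp (θ : ℤ → Fin k) : Antitone fun n => range (bcomp f θ n) :=
  antitone_nat_of_succ_le fun n => by
    rw [bcomp, range_comp]
    exact image_subset_range _ _

theorem spine_eq_iInter_range (θ : ℤ → Fin k) : spine f θ = ⋂ n, range (bcomp f θ n) := by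
  simp only [spine, image_univ]
  exact (antitone_range_bcomp θ).iInter_nat_add 1

variable [TopologicalSpace M] [CompactSpace M] [T2Space M]

theorem eventually_range_bcomp_subset (hf : ∀ i, Continuous (f i)) {θ : ℤ → Fin k} {p : M}
    (hθ : spine f θ = {p}) {U : Set M} (hU : U ∈ 𝓝 p) :
    ∀ᶠ n in atTop, range (bcomp f θ n) ⊆ U := by
  obtain ⟨n, hn⟩ := exists_subset_nhds_of_isCompact (antitone_range_bcomp θ).directed_ge
    (fun n => isCompact_range (continuous_bcomp hf θ n))
    fun q hq => by
      rw [← spine_eq_iInter_range, hθ] at hq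
      rwa [mem_singleton_iff.mp hq]
  exact eventually_atTop.mpr ⟨n, fun m hm => (antitone_range_bcomp θ hm).trans hn⟩

theorem exists_eqOn_spine_eq (hf : ∀ i, Continuous (f i)) {W : ℤ → Fin k} {p : M}
    (hW : spine f W = {p}) (η : ℤ → Fin k) (m : ℕ) :
    ∃ ϑ, EqOn ϑ η (Ici (-(m : ℤ))) ∧ spine f ϑ = {bcomp f η m p} := by
  classical
  let ϑ : ℤ → Fin k := fun i => if -(m : ℤ) ≤ i then η i else W (i + m)
  have hϑη : EqOn ϑ η (Ici (-(m : ℤ))) := fun i hi => if_pos hi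
  have hsplit : ∀ s, bcomp f ϑ (s + m) = bcomp f η m ∘ bcomp f W s := fun s => by
    rw [add_comm, bcomp_add, bcomp_congr (hϑη.mono Ico_subset_Ici_self)]
    congr 1
    refine bcomp_congr fun i hi => ?_
    simp only [ϑ, if_neg (by linarith [hi.2] : ¬-(m : ℤ) ≤ i - m), sub_add_cancel]
  refine ⟨ϑ, hϑη, ?_⟩
  rw [spine_eq_iInter_range, ← (antitone_range_bcomp ϑ).iInter_nat_add m]
  simp only [hsplit, range_comp]
  rw [iInter_image_eq_image_iInter_of_antitone (continuous_bcomp hf η m)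
    (antitone_range_bcomp W) (isCompact_range (continuous_bcomp hf W 0))
    (fun n => (isCompact_range (continuous_bcomp hf W n)).isClosed),
    ← spine_eq_iInter_range, hW, image_singleton]

end Spine

theorem frequently_shiftMap_iterate_mem_cylinder {k : ℕ} {θ : ℤ → Fin k}
    (hdense : Dense (range fun n : ℕ => shiftMap^[n] θ)) (ξ : ℤ → Fin k) (m : ℕ) :
    ∃ᶠ n in atTop, shiftMap^[n] θ ∈ cylinder ξ m :=
  frequently_iterate_mem_of_dense_range continuous_shiftMap surjective_shiftMap hdense
    (isOpen_cylinder ξ m) ⟨ξ, fun _ _ => rfl⟩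

section Target

variable {k : ℕ} {M : Type*} [TopologicalSpace M] [CompactSpace M] [T2Space M]
  {f : Fin k → M → M} {ρ : (ℤ → Fin k) → M}

theorem exists_mem_weakHyp_eqOn_coding_eq (hf : ∀ i, Continuous (f i))
    (hρ : ∀ θ ∈ weakHyp f, spine f θ = {ρ θ}) {W : ℤ → Fin k} (hW : W ∈ weakHyp f)
    (η : ℤ → Fin k) (m : ℕ) :
    ∃ ϑ ∈ weakHyp f, EqOn ϑ η (Ici (-(m : ℤ))) ∧ ρ ϑ = bcomp f η m (ρ W) := by
  obtain ⟨ϑ, hϑη, hϑ⟩ := exists_eqOn_spine_eq hf (hρ W hW) η m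
  have hmem : ϑ ∈ weakHyp f := ⟨_, hϑ⟩
  exact ⟨ϑ, hmem, hϑη, singleton_injective ((hρ ϑ hmem).symm.trans hϑ)⟩

theorem mapsTo_target (hf : ∀ i, Continuous (f i))
    (hρ : ∀ θ ∈ weakHyp f, spine f θ = {ρ θ}) (i : Fin k) :
    MapsTo (f i) (ρ '' weakHyp f) (ρ '' weakHyp f) := by
  rintro _ ⟨W, hW, rfl⟩
  obtain ⟨ϑ, hϑ, -, hρϑ⟩ := exists_mem_weakHyp_eqOn_coding_eq hf hρ hW (fun _ => i) 1
  exact ⟨ϑ, hϑ, hρϑ⟩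

theorem mapsTo_bcomp_closure_target (hf : ∀ i, Continuous (f i))
    (hρ : ∀ θ ∈ weakHyp f, spine f θ = {ρ θ}) (ξ : ℤ → Fin k) (n : ℕ) :
    MapsTo (bcomp f ξ n) (closure (ρ '' weakHyp f)) (closure (ρ '' weakHyp f)) := by
  induction n with
  | zero => exact mapsTo_id _
  | succ n ih => exact ih.comp ((mapsTo_target hf hρ _).closure (hf _))

theorem eventually_bcomp_orbit_mem_closure_target (hf : ∀ i, Continuous (f i))
    (hρ : ∀ θ ∈ weakHyp f, spine f θ = {ρ θ})
    (hint : (interior (closure (ρ '' weakHyp f))).Nonempty) {θ : ℤ → Fin k}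
    (hdense : Dense (range fun n : ℕ => shiftMap^[n] θ)) (x : M) :
    ∀ᶠ n in atTop, bcomp f (shiftMap^[n] θ) n x ∈ closure (ρ '' weakHyp f) := by
  obtain ⟨b, hb⟩ := hint
  obtain ⟨_, hWint, W, hW, rfl⟩ := mem_closure_iff.mp (interior_subset hb) _ isOpen_interior hb
  obtain ⟨n₀, hn₀⟩ := (eventually_range_bcomp_subset hf (hρ W hW)
    (isOpen_interior.mem_nhds hWint)).exists
  obtain ⟨s, hsW, hs⟩ := ((frequently_shiftMap_iterate_mem_cylinder hdense W n₀).and_eventually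
    (eventually_ge_atTop n₀)).exists
  have hsA : bcomp f (shiftMap^[s] θ) s x ∈ closure (ρ '' weakHyp f) := by
    rw [bcomp_orbit_of_mem_cylinder hs hsW]
    exact interior_subset (hn₀ (mem_range_self _))
  refine eventually_atTop.mpr ⟨s, fun t hst => ?_⟩
  rw [bcomp_orbit_of_le θ (Nat.sub_le t s), Nat.sub_sub_self hst]
  exact mapsTo_bcomp_closure_target hf hρ _ _ hsA

end Target

section OmegaLimit

variable {k : ℕ} {M : Type*} [TopologicalSpace M] [CompactSpace M] [T2Space M]
  {f : Fin k → M → M} {ρ : (ℤ → Fin k) → M}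

theorem mapClusterPt_graph (hf : ∀ i, Continuous (f i))
    (hρ : ∀ θ ∈ weakHyp f, spine f θ = {ρ θ}) {θ : ℤ → Fin k}
    (hdense : Dense (range fun n : ℕ => shiftMap^[n] θ)) (x : M) {ϑ : ℤ → Fin k}
    (hϑ : ϑ ∈ weakHyp f) :
    MapClusterPt (ϑ, ρ ϑ) atTop fun n => (skewProd f)^[n] (θ, x) := by
  refine ((nhds_basis_cylinder ϑ).prod_nhds (𝓝 (ρ ϑ)).basis_sets).mapClusterPt_iff_frequently.mpr ?_
  rintro ⟨m, V⟩ ⟨-, hV⟩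
  obtain ⟨m', hm'V, hmm'⟩ := ((eventually_range_bcomp_subset hf (hρ ϑ hϑ) hV).and
    (eventually_ge_atTop m)).exists
  refine ((frequently_shiftMap_iterate_mem_cylinder hdense ϑ m').and_eventually
    (eventually_ge_atTop m')).mono fun n ⟨hcyl, hn⟩ => ?_
  rw [iterate_skewProd]
  refine ⟨antitone_cylinder ϑ hmm' hcyl, hm'V ?_⟩
  rw [bcomp_orbit_of_mem_cylinder hn hcyl]
  exact mem_range_self _

theorem mem_image_closure_target_of_mapClusterPt (hf : ∀ i, Continuous (f i))
    (hρ : ∀ θ ∈ weakHyp f, spine f θ = {ρ θ})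
    (hint : (interior (closure (ρ '' weakHyp f))).Nonempty) {θ : ℤ → Fin k}
    (hdense : Dense (range fun n : ℕ => shiftMap^[n] θ)) (x : M) {η : ℤ → Fin k} {y : M}
    (h : MapClusterPt (η, y) atTop fun n => (skewProd f)^[n] (θ, x)) (m : ℕ) :
    y ∈ bcomp f η m '' closure (ρ '' weakHyp f) := by
  have hclosed : IsClosed (bcomp f η m '' closure (ρ '' weakHyp f)) :=
    (isClosed_closure.isCompact.image (continuous_bcomp hf η m)).isClosed
  refine hclosed.closure_subset (mem_closure_iff_nhds.mpr fun V hV => ?_)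
  obtain ⟨t₀, ht₀⟩ := eventually_atTop.mp
    (eventually_bcomp_orbit_mem_closure_target hf hρ hint hdense x)
  obtain ⟨n, hmem, hn⟩ := ((mapClusterPt_iff_frequently.mp h _
    (prod_mem_nhds ((isOpen_cylinder η m).mem_nhds fun _ _ => rfl) hV)).and_eventually
    (eventually_ge_atTop (t₀ + m))).exists
  rw [iterate_skewProd, mem_prod, bcomp_orbit_of_mem_cylinder (by omega) hmem.1] at hmem
  exact ⟨_, hmem.2, _, ht₀ (n - m) (by omega), rfl⟩

theorem mem_closure_graph_of_forall_mem_image (hf : ∀ i, Continuous (f i))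
    (hρ : ∀ θ ∈ weakHyp f, spine f θ = {ρ θ}) {η : ℤ → Fin k} {y : M}
    (h : ∀ m, y ∈ bcomp f η m '' closure (ρ '' weakHyp f)) :
    (η, y) ∈ closure ((fun ϑ => (ϑ, ρ ϑ)) '' weakHyp f) := by
  refine (mem_closure_iff_nhds_basis' ((nhds_basis_cylinder η).prod_nhds (𝓝 y).basis_sets)).mpr ?_
  rintro ⟨m, V⟩ ⟨-, hV⟩
  obtain ⟨q, hq, rfl⟩ := h m
  obtain ⟨_, hWV, W, hW, rfl⟩ := mem_closure_iff_nhds.mp hq _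
    ((continuous_bcomp hf η m).continuousAt.preimage_mem_nhds hV)
  obtain ⟨ϑ, hϑ, hϑη, hρϑ⟩ := exists_mem_weakHyp_eqOn_coding_eq hf hρ hW η m
  refine ⟨(ϑ, ρ ϑ), ⟨fun i hi => hϑη hi.1, ?_⟩, ϑ, hϑ, rfl⟩
  rw [hρϑ]
  exact hWV

end OmegaLimit

theorem omegaLimit_eq_closure_graph_of_nonempty_interior_general
    {k : ℕ} {M : Type*} [MetricSpace M] [CompactSpace M]
    (f : Fin k → M → M) (hf : ∀ i, Continuous (f i))
    (ρ : (ℤ → Fin k) → M) (hρ : ∀ θ ∈ weakHyp f, spine f θ = {ρ θ})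
    (hint : (interior (closure (ρ '' weakHyp f))).Nonempty)
    (θ : ℤ → Fin k) (x : M)
    (hdense : Dense (Set.range fun n : ℕ => shiftMap^[n] θ)) :
    omegaLim (skewProd f) (θ, x) = closure ((fun ϑ => (ϑ, ρ ϑ)) '' weakHyp f) := by
  rw [omegaLim_eq_setOf_mapClusterPt]
  refine Subset.antisymm (fun ⟨η, y⟩ h => ?_) (closure_minimal ?_ isClosed_setOfPred_clusterPt)
  · exact mem_closure_graph_of_forall_mem_image hf hρ
      (mem_image_closure_target_of_mapClusterPt hf hρ hint hdense x h)
  · rintro _ ⟨ϑ, hϑ, rfl⟩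
    exact mapClusterPt_graph hf hρ hdense x hϑ

/-- If `S_F ≠ ∅` and the closure of the target set `A_F = ρ(S_F)` has nonempty interior,
then for every point `z = (θ, x)` whose base forward orbit is dense, the ω-limit set of
`z` equals the closure of the graph of the coding map. -/
theorem omegaLimit_eq_closure_graph_of_nonempty_interior
    {k : ℕ} (hk : 1 ≤ k) {M : Type*} [MetricSpace M] [CompactSpace M] [Nonempty M]
    (f : Fin k → M → M) (hf : ∀ i, Continuous (f i))
    (hS : (weakHyp f).Nonempty)
    (ρ : (ℤ → Fin k) → M) (hρ : ∀ θ ∈ weakHyp f, spine f θ = {ρ θ})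
    (hint : (interior (closure (ρ '' weakHyp f))).Nonempty)
    (θ : ℤ → Fin k) (x : M)
    (hdense : Dense (Set.range fun n : ℕ => shiftMap^[n] θ)) :
    omegaLim (skewProd f) (θ, x) = closure ((fun ϑ => (ϑ, ρ ϑ)) '' weakHyp f) :=
  omegaLimit_eq_closure_graph_of_nonempty_interior_general f hf ρ hρ hint θ x hdense
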